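/- arXiv:1307.4363 — 3 statements merged into one kernel-verified Lean document; each statement's English description precedes it below -/
import Mathlib

section
/- Let G be a compact Lie group acting linearly on finite-dimensional real vector spaces V and W, and let f : V → W be a smooth G-equivariant map with f(0) = 0 whose differential df₀ at 0 is surjective. Then there exist a G-invariant open neighborhood U of 0 in V and a G-equivariant smooth embedding χ : U → V with χ(0) = 0 such that f(χ(v)) = df₀(v) for all v ∈ U. -/
open MeasureTheory Set Topology

theorem core_isOpen' {G X : Type*} [TopologicalSpace G] [CompactSpace G] [TopologicalSpace X]
    {a : G → X → X} (ha : Continuous fun p : G × X => a p.1 p.2) {A : Set X} (hA : IsOpen A) :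
    IsOpen {v | ∀ g : G, a g v ∈ A} := by
  rw [isOpen_iff_forall_mem_open]
  intro v hv
  have hsub : (Set.univ : Set G) ×ˢ ({v} : Set X) ⊆ (fun p : G × X => a p.1 p.2) ⁻¹' A := by
    rintro ⟨g, x⟩ ⟨-, hx⟩
    rcases hx with rfl
    exact hv g
  obtain ⟨u, w, hu, hw, hsu, htw, huw⟩ :=
    generalized_tube_lemma isCompact_univ isCompact_singleton (hA.preimage ha) hsub
  exact ⟨w, fun x hx g => huw (Set.mk_mem_prod (hsu (mem_univ g)) hx), hw, htw rfl⟩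

set_option maxHeartbeats 1000000 in
/-- **Equivariant linearization of submersions** (Lemma 4 of the paper).
Let `G` be a compact (Lie) group acting linearly and continuously on finite-dimensional real
vector spaces `V` and `W`, and let `f : V → W` be a smooth `G`-equivariant map with `f 0 = 0`
whose differential at `0` is surjective. Then there are a `G`-invariant open neighborhood `U`
of `0` and a `G`-equivariant smooth open embedding `χ : U → V` (a diffeomorphism onto its open
image, with smooth inverse `χinv`) such that `χ 0 = 0` and `f (χ v) = df₀ v` for all `v ∈ U`. -/
theorem equivariant_linearization_of_submersion
    {G V W : Type*} [Group G] [TopologicalSpace G] [IsTopologicalGroup G] [CompactSpace G]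
    [NormedAddCommGroup V] [NormedSpace ℝ V] [FiniteDimensional ℝ V]
    [NormedAddCommGroup W] [NormedSpace ℝ W] [FiniteDimensional ℝ W]
    (ρ : G →* (V ≃L[ℝ] V)) (τ : G →* (W ≃L[ℝ] W))
    (hρ : Continuous fun p : G × V => ρ p.1 p.2)
    (hτ : Continuous fun p : G × W => τ p.1 p.2)
    (f : V → W) (hf : ContDiff ℝ (⊤ : ℕ∞) f) (hf0 : f 0 = 0)
    (hequiv : ∀ (g : G) (v : V), f (ρ g v) = τ g (f v))
    (hsubm : Function.Surjective (fderiv ℝ f 0)) :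
    ∃ U : Set V, IsOpen U ∧ (0 : V) ∈ U ∧ (∀ g : G, ρ g '' U = U) ∧
      ∃ χ : V → V, ContDiffOn ℝ (⊤ : ℕ∞) χ U ∧ Set.InjOn χ U ∧ IsOpen (χ '' U) ∧
        (∃ χinv : V → V, ContDiffOn ℝ (⊤ : ℕ∞) χinv (χ '' U) ∧ ∀ v ∈ U, χinv (χ v) = v) ∧
        χ 0 = 0 ∧ (∀ (g : G), ∀ v ∈ U, χ (ρ g v) = ρ g (χ v)) ∧
        ∀ v ∈ U, f (χ v) = fderiv ℝ f 0 v := by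
  classical
  set L : V →L[ℝ] W := fderiv ℝ f 0 with hLdef
  have hfd : Differentiable ℝ f := hf.differentiable (by simp)
  have hρmul : ∀ (a b : G) (x : V), ρ a (ρ b x) = ρ (a * b) x := by
    intro a b x; rw [map_mul]; rfl
  have hτmul : ∀ (a b : G) (x : W), τ a (τ b x) = τ (a * b) x := by
    intro a b x; rw [map_mul]; rfl
  have hρone : ∀ x : V, ρ 1 x = x := by intro x; rw [map_one]; rfl
  have hτone : ∀ x : W, τ 1 x = x := by intro x; rw [map_one]; rfl
  -- equivariance of L
  have hLequiv : ∀ g : G, L.comp (ρ g : V →L[ℝ] V) = ((τ g : W →L[ℝ] W)).comp L := by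
    intro g
    have h1 : HasFDerivAt (fun v => τ g (f v)) (((τ g : W →L[ℝ] W)).comp L) 0 :=
      ((τ g : W →L[ℝ] W).hasFDerivAt).comp 0 (hfd 0).hasFDerivAt
    have h2 : HasFDerivAt (fun v => f (ρ g v)) (L.comp (ρ g : V →L[ℝ] V)) 0 := by
      have h3 : HasFDerivAt f L ((ρ g : V →L[ℝ] V) 0) := by
        simpa using (hfd 0).hasFDerivAt
      exact h3.comp 0 (ρ g : V →L[ℝ] V).hasFDerivAt
    have h4 : (fun v => f (ρ g v)) = fun v => τ g (f v) := funext fun v => hequiv g v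
    rw [h4] at h2
    exact h2.unique h1
  have hLequiv' : ∀ (g : G) (v : V), L (ρ g v) = τ g (L v) := fun g v =>
    congrFun (congrArg DFunLike.coe (hLequiv g)) v
  -- a continuous linear right inverse E₀
  obtain ⟨E₀ₗ, hE₀ₗ⟩ :=
    (L : V →ₗ[ℝ] W).exists_rightInverse_of_surjective (LinearMap.range_eq_top.mpr hsubm)
  set E₀ : W →L[ℝ] V := LinearMap.toContinuousLinearMap E₀ₗ with hE₀def
  have hE₀ : ∀ w, L (E₀ w) = w := fun w => congrFun (congrArg DFunLike.coe hE₀ₗ) w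
  -- Haar measure on G
  letI mG : MeasurableSpace G := borel G
  haveI : BorelSpace G := ⟨rfl⟩
  have hK₀ : (interior (Set.univ : Set G)).Nonempty := by
    simp [interior_univ, Set.univ_nonempty]
  set K₀ : TopologicalSpace.PositiveCompacts G := ⟨⟨Set.univ, isCompact_univ⟩, hK₀⟩ with hK₀def
  set μ : Measure G := Measure.haarMeasure K₀ with hμdef
  haveI : IsProbabilityMeasure μ := ⟨by
    have := Measure.haarMeasure_self (K₀ := K₀)
    exact this⟩
  -- the averaged right inverse
  have hcont : ∀ w : W, Continuous fun g : G => ρ g (E₀ (τ g⁻¹ w)) := by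
    intro w
    have h1 : Continuous fun g : G => τ g⁻¹ w :=
      hτ.comp ((continuous_inv).prodMk continuous_const)
    exact hρ.comp (continuous_id.prodMk (E₀.continuous.comp h1))
  have hint : ∀ w : W, Integrable (fun g : G => ρ g (E₀ (τ g⁻¹ w))) μ := by
    intro w
    exact integrableOn_univ.mp
      ((hcont w).continuousOn.integrableOn_compact' isCompact_univ MeasurableSet.univ)
  set Eℓ : W →ₗ[ℝ] V :=
    { toFun := fun w => ∫ g, ρ g (E₀ (τ g⁻¹ w)) ∂μ
      map_add' := by
        intro w₁ w₂
        simp only [map_add]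
        exact integral_add (hint w₁) (hint w₂)
      map_smul' := by
        intro c w
        simp only [_root_.map_smul, RingHom.id_apply]
        exact integral_smul c _ } with hEℓdef
  set E : W →L[ℝ] V := LinearMap.toContinuousLinearMap Eℓ with hEdef
  have hEapp : ∀ w, E w = ∫ g, ρ g (E₀ (τ g⁻¹ w)) ∂μ := fun w => rfl
  have hLE : ∀ w, L (E w) = w := by
    intro w
    rw [hEapp, ← ContinuousLinearMap.integral_comp_comm L (hint w)]
    have h5 : ∀ g : G, L (ρ g (E₀ (τ g⁻¹ w))) = w := by
      intro g
      rw [hLequiv' g, hE₀, hτmul, mul_inv_cancel, hτone]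
    simp only [h5]
    simp
  have hEequiv : ∀ (g₀ : G) (w : W), E (τ g₀ w) = ρ g₀ (E w) := by
    intro g₀ w
    have h1 : ρ g₀ (E w) = ∫ g, ρ g₀ (ρ g (E₀ (τ g⁻¹ w))) ∂μ := by
      rw [hEapp]
      exact (ContinuousLinearMap.integral_comp_comm (ρ g₀ : V →L[ℝ] V) (hint w)).symm
    have h2 : ∀ g : G, ρ g₀ (ρ g (E₀ (τ g⁻¹ w))) = ρ (g₀ * g) (E₀ (τ (g₀ * g)⁻¹ (τ g₀ w))) := by
      intro g
      have h3 : τ (g₀ * g)⁻¹ (τ g₀ w) = τ g⁻¹ w := by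
        rw [hτmul]
        congr 2
        group
      rw [h3, hρmul]
    rw [h1]
    simp only [h2]
    rw [integral_mul_left_eq_self (μ := μ) (fun g => ρ g (E₀ (τ g⁻¹ (τ g₀ w)))) g₀]
    exact (hEapp _).symm
  -- the global map Φ with L ∘ Φ = f
  set Φ : V → V := fun v => v + E (f v - L v) with hΦdef
  have hΦsmooth : ContDiff ℝ (⊤ : ℕ∞) Φ := contDiff_id.add (E.contDiff.comp (hf.sub L.contDiff))
  have hΦ0 : Φ 0 = 0 := by simp [hΦdef, hf0]
  have hLΦ : ∀ v, L (Φ v) = f v := by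
    intro v
    simp [hΦdef, map_add, hLE]
  have hΦequiv : ∀ (g : G) (v : V), Φ (ρ g v) = ρ g (Φ v) := by
    intro g v
    simp only [hΦdef]
    rw [hequiv, hLequiv' g v, ← map_sub (τ g) (f v) (L v)]
    show ρ g v + E ((τ g) (f v - L v)) = ρ g (Φ v)
    rw [hEequiv, hΦdef]
    exact (map_add (ρ g) v (E (f v - L v))).symm
  have hd0 : HasFDerivAt Φ ((ContinuousLinearEquiv.refl ℝ V : V ≃L[ℝ] V) : V →L[ℝ] V) 0 := by
    have h1 : HasFDerivAt (fun v => f v - L v) (L - L) 0 := (hfd 0).hasFDerivAt.sub L.hasFDerivAt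
    have h2 : HasFDerivAt (fun v => E (f v - L v)) (E.comp (L - L)) 0 :=
      E.hasFDerivAt.comp 0 h1
    have h3 := (hasFDerivAt_id (0 : V)).add h2
    convert h3 using 1
    · ext v
      simp [hΦdef]
    · ext v
      simp
  -- local homeomorphism from the inverse function theorem at 0
  have hCD0 : ContDiffAt ℝ (⊤ : ℕ∞) Φ 0 := hΦsmooth.contDiffAt
  set P := hCD0.toOpenPartialHomeomorph Φ hd0 (by simp) with hPdef
  have hPcoe : (P : V → V) = Φ := hCD0.toOpenPartialHomeomorph_coe hd0 (by simp)
  have h0src : (0 : V) ∈ P.source := hCD0.mem_toOpenPartialHomeomorph_source hd0 (by simp)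
  -- set where the derivative of Φ is invertible
  set D : Set V := {v | IsUnit (fderiv ℝ Φ v)} with hDdef
  have hDopen : IsOpen D := Units.isOpen.preimage (hΦsmooth.continuous_fderiv (by simp))
  have h0D : (0 : V) ∈ D := by
    have h1 : fderiv ℝ Φ 0 = ((ContinuousLinearEquiv.refl ℝ V : V ≃L[ℝ] V) : V →L[ℝ] V) :=
      hd0.fderiv
    have h2 : fderiv ℝ Φ 0 = 1 := by
      rw [h1]; rfl
    rw [hDdef, mem_setOf_eq, h2]
    exact isUnit_one
  set s : Set V := P.source ∩ D with hsdef
  have hsopen : IsOpen s := P.open_source.inter hDopen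
  set s' : Set V := {v | ∀ g : G, ρ g v ∈ s} with hs'def
  have hs'open : IsOpen s' := core_isOpen' hρ hsopen
  have h0s' : (0 : V) ∈ s' := by
    intro g
    rw [show (ρ g) (0 : V) = 0 from map_zero (ρ g)]
    exact ⟨h0src, h0D⟩
  have hs'sub : s' ⊆ s := by
    intro v hv
    have := hv 1
    rwa [hρone] at this
  have hs'inv : ∀ g : G, ∀ v ∈ s', ρ g v ∈ s' := by
    intro g v hv g'
    rw [hρmul]
    exact hv (g' * g)
  set T : Set V := Φ '' s' with hTdef
  have hTopen : IsOpen T := by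
    rw [hTdef, ← hPcoe]
    exact P.isOpen_image_of_subset_source hs'open (hs'sub.trans inter_subset_left)
  have hTsubtgt : T ⊆ P.target := by
    rintro _ ⟨w, hw, rfl⟩
    rw [← hPcoe]
    exact P.map_source (hs'sub hw).1
  set U : Set V := {v | ∀ g : G, ρ g v ∈ T} with hUdef
  have hUopen : IsOpen U := core_isOpen' hρ hTopen
  have hUsub : U ⊆ T := by
    intro v hv
    have := hv 1
    rwa [hρone] at this
  have h0U : (0 : V) ∈ U := by
    intro g
    rw [show (ρ g) (0 : V) = 0 from map_zero (ρ g)]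
    exact ⟨0, h0s', hΦ0⟩
  have hUinv' : ∀ g : G, ∀ v ∈ U, ρ g v ∈ U := by
    intro g v hv g'
    rw [hρmul]
    exact hv (g' * g)
  have hUinv : ∀ g : G, ρ g '' U = U := by
    intro g
    apply Subset.antisymm
    · rintro _ ⟨v, hv, rfl⟩
      exact hUinv' g v hv
    · intro v hv
      refine ⟨ρ g⁻¹ v, hUinv' g⁻¹ v hv, ?_⟩
      rw [hρmul, mul_inv_cancel, hρone]
  -- the map χ
  set χ : V → V := fun v => P.symm v with hχdef
  have hkey : ∀ v ∈ T, χ v ∈ s' ∧ Φ (χ v) = v := by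
    rintro _ ⟨w, hw, rfl⟩
    have hws : w ∈ P.source := (hs'sub hw).1
    have h1 : P.symm (Φ w) = w := by
      conv_lhs => rw [← hPcoe]
      exact P.left_inv hws
    rw [hχdef]
    simp only [h1]
    exact ⟨hw, trivial⟩
  have hχ0 : χ 0 = 0 := by
    have h1 : P.symm (Φ 0) = 0 := by
      conv_lhs => rw [← hPcoe]
      exact P.left_inv h0src
    rw [hχdef]
    simp only [hΦ0] at h1
    exact h1
  -- smoothness of χ on U
  have hχsmooth : ContDiffOn ℝ (⊤ : ℕ∞) χ U := by
    intro v hv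
    obtain ⟨hws', hΦw⟩ := hkey v (hUsub hv)
    set w := χ v with hwdef
    have hwD : IsUnit (fderiv ℝ Φ w) := (hs'sub hws').2
    obtain ⟨u, hu⟩ := hwD
    set A : V ≃L[ℝ] V := ContinuousLinearEquiv.unitsEquiv ℝ V u with hAdef
    have hAcoe : (A : V →L[ℝ] V) = fderiv ℝ Φ w := by
      rw [← hu]
      rfl
    have hA : HasFDerivAt Φ ((A : V →L[ℝ] V)) w := by
      rw [hAcoe]
      exact (hΦsmooth.differentiable (by simp) w).hasFDerivAt
    have hCDw : ContDiffAt ℝ (⊤ : ℕ∞) Φ w := hΦsmooth.contDiffAt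
    have hst : HasStrictFDerivAt Φ ((A : V →L[ℝ] V)) w := hCDw.hasStrictFDerivAt' hA (by simp)
    set ginv : V → V := hCDw.localInverse hA (by simp) with hginvdef
    have hgCD : ContDiffAt ℝ (⊤ : ℕ∞) ginv v := by
      have := hCDw.to_localInverse (hf' := hA) (hn := (by simp))
      rwa [hΦw] at this
    have hright : ∀ᶠ y in 𝓝 v, Φ (ginv y) = y := by
      have := hst.eventually_right_inverse
      rw [hΦw] at this
      exact this
    have hginvv : ginv v = w := by
      have := hst.localInverse_apply_image
      rw [hΦw] at this
      exact this
    have hcontg : ContinuousAt ginv v := by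
      have := hst.localInverse_continuousAt
      rw [hΦw] at this
      exact this
    have hsrc : ∀ᶠ y in 𝓝 v, ginv y ∈ P.source := by
      have h1 : P.source ∈ 𝓝 (ginv v) := by
        rw [hginvv]
        exact P.open_source.mem_nhds (hs'sub hws').1
      exact hcontg.preimage_mem_nhds h1
    have hT' : ∀ᶠ y in 𝓝 v, y ∈ P.target :=
      P.open_target.mem_nhds (hTsubtgt (hUsub hv))
    have heq : χ =ᶠ[𝓝 v] ginv := by
      filter_upwards [hright, hsrc, hT'] with y h1 h2 h3
      have h4 : P (χ y) = y := P.right_inv h3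
      have h5 : P (ginv y) = y := by rw [hPcoe]; exact h1
      exact P.injOn (P.map_target h3) h2 (h4.trans h5.symm)
    exact ((hgCD.congr_of_eventuallyEq heq).contDiffWithinAt)
  -- injectivity and openness of image
  have hUtgt : U ⊆ P.target := hUsub.trans hTsubtgt
  have hχinj : Set.InjOn χ U := by
    intro a ha b hb h
    exact P.symm.injOn (by rw [P.symm_source]; exact hUtgt ha)
      (by rw [P.symm_source]; exact hUtgt hb) h
  have hχopen : IsOpen (χ '' U) := by
    have : χ '' U = P.symm '' U := rfl
    rw [this]
    exact P.symm.isOpen_image_of_subset_source hUopen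
      (by rw [P.symm_source]; exact hUtgt)
  refine ⟨U, hUopen, h0U, hUinv, χ, hχsmooth, hχinj, hχopen,
    ⟨Φ, hΦsmooth.contDiffOn, fun v hv => (hkey v (hUsub hv)).2⟩, hχ0, ?_, ?_⟩
  · intro g v hv
    obtain ⟨hw1, hw2⟩ := hkey v (hUsub hv)
    have h1 : ρ g (χ v) ∈ s' := hs'inv g _ hw1
    have h2 : Φ (ρ g (χ v)) = ρ g v := by rw [hΦequiv, hw2]
    have h3 : χ (Φ (ρ g (χ v))) = ρ g (χ v) := by
      have h4 : P.symm (Φ (ρ g (χ v))) = ρ g (χ v) := by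
        conv_lhs => rw [← hPcoe]
        exact P.left_inv (hs'sub h1).1
      exact h4
    rw [← h2, h3]
  · intro v hv
    calc f (χ v) = L (Φ (χ v)) := (hLΦ _).symm
    _ = L v := by rw [(hkey v (hUsub hv)).2]
end

section
/- Let H be a finite group acting by diffeomorphisms on an open set O ⊆ V of a finite-dimensional vector space, fixing a point x₀ ∈ O. Then there exist an H-invariant open neighborhood O' ⊆ O of x₀, an open neighborhood W of 0 in V, and a diffeomorphism φ : O' → W with φ(x₀) = 0 conjugating the H-action on O' to the linear action of H on W given by the differentials at x₀ of the action maps. -/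
/-- **Bochner linearization for finite groups.** Let a finite group `H` act by
diffeomorphisms (smooth maps `σ g` with the group laws) on an open set `O` of a
finite-dimensional vector space `V`, fixing a point `x₀ ∈ O`. Then there are an
`H`-invariant open neighborhood `O' ⊆ O` of `x₀`, an open neighborhood `W` of `0` in `V`,
and a diffeomorphism `φ : O' → W` with `φ x₀ = 0` conjugating the action on `O'` to the
linear action `g ↦ d(σ g)_{x₀}` on `W`. -/
theorem bochner_linearization_finite_group
    {V : Type*} [NormedAddCommGroup V] [NormedSpace ℝ V] [FiniteDimensional ℝ V]
    {H : Type*} [Group H] [Finite H]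
    (O : Set V) (hO : IsOpen O) (x₀ : V) (hx₀ : x₀ ∈ O)
    (σ : H → V → V)
    (hσ_maps : ∀ g : H, Set.BijOn (σ g) O O)
    (hσ_smooth : ∀ g : H, ContDiffOn ℝ (⊤ : ℕ∞) (σ g) O)
    (hσ_one : ∀ x ∈ O, σ 1 x = x)
    (hσ_mul : ∀ (g k : H), ∀ x ∈ O, σ g (σ k x) = σ (g * k) x)
    (hσ_fix : ∀ g : H, σ g x₀ = x₀) :
    ∃ O' : Set V, ∃ W : Set V, ∃ φ : V → V,
      IsOpen O' ∧ O' ⊆ O ∧ x₀ ∈ O' ∧ (∀ g : H, σ g '' O' = O') ∧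
      IsOpen W ∧ (0 : V) ∈ W ∧
      ContDiffOn ℝ (⊤ : ℕ∞) φ O' ∧ Set.BijOn φ O' W ∧ φ x₀ = 0 ∧
      (∃ ψ : V → V, ContDiffOn ℝ (⊤ : ℕ∞) ψ W ∧ (∀ x ∈ O', ψ (φ x) = x) ∧ ∀ y ∈ W, φ (ψ y) = y) ∧
      ∀ g : H, ∀ x ∈ O', φ (σ g x) = fderiv ℝ (σ g) x₀ (φ x) := by
  classical
  have : Fintype H := Fintype.ofFinite H
  set A : H → V →L[ℝ] V := fun g => fderiv ℝ (σ g) x₀ with hAdef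
  have hca : ∀ g : H, ContDiffAt ℝ (⊤ : ℕ∞) (σ g) x₀ :=
    fun g => (hσ_smooth g).contDiffAt (hO.mem_nhds hx₀)
  have hder : ∀ g : H, HasFDerivAt (σ g) (A g) x₀ :=
    fun g => ((hca g).differentiableAt (by simp)).hasFDerivAt
  have hcomp : ∀ g k : H, (A g).comp (A k) = A (g * k) := by
    intro g k
    have h1 : HasFDerivAt (σ g ∘ σ k) ((A g).comp (A k)) x₀ := by
      have hg := hder g
      rw [← hσ_fix k] at hg
      exact hg.comp x₀ (hder k)
    have h2 : σ (g * k) =ᶠ[nhds x₀] σ g ∘ σ k := by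
      filter_upwards [hO.mem_nhds hx₀] with x hx
      exact (hσ_mul g k x hx).symm
    exact ((h1.congr_of_eventuallyEq h2).fderiv).symm
  have hA_one : A 1 = ContinuousLinearMap.id ℝ V := by
    have h2 : σ 1 =ᶠ[nhds x₀] id := by
      filter_upwards [hO.mem_nhds hx₀] with x hx
      exact hσ_one x hx
    have h3 : HasFDerivAt (σ 1) (ContinuousLinearMap.id ℝ V) x₀ :=
      (hasFDerivAt_id x₀).congr_of_eventuallyEq h2
    exact h3.fderiv
  have hAinv : ∀ g : H, (A g⁻¹).comp (A g) = ContinuousLinearMap.id ℝ V := by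
    intro g; rw [hcomp, inv_mul_cancel, hA_one]
  have hAinv' : ∀ g : H, (A g).comp (A g⁻¹) = ContinuousLinearMap.id ℝ V := by
    intro g; rw [hcomp, mul_inv_cancel, hA_one]
  set c : ℝ := ((Fintype.card H : ℝ))⁻¹ with hcdef
  set φ : V → V := fun x => c • ∑ g : H, (A g⁻¹) (σ g x - x₀) with hφdef
  have hφ0 : φ x₀ = 0 := by
    simp [hφdef, hσ_fix]
  have hφO : ContDiffOn ℝ (⊤ : ℕ∞) φ O := by
    apply ContDiffOn.const_smul
    apply ContDiffOn.sum
    intro g _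
    exact (A g⁻¹).contDiff.comp_contDiffOn ((hσ_smooth g).sub contDiffOn_const)
  -- derivative of φ at x₀ is the identity
  have hφder : HasFDerivAt φ (ContinuousLinearMap.id ℝ V) x₀ := by
    have h1 : ∀ g : H, HasFDerivAt (fun x => (A g⁻¹) (σ g x - x₀))
        (ContinuousLinearMap.id ℝ V) x₀ := by
      intro g
      have h := ((A g⁻¹).hasFDerivAt).comp x₀ ((hder g).sub_const x₀)
      rwa [hAinv g] at h
    have h2 : HasFDerivAt (fun x => ∑ g : H, (A g⁻¹) (σ g x - x₀))
        (∑ _g : H, ContinuousLinearMap.id ℝ V) x₀ :=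
      HasFDerivAt.fun_sum fun g _ => h1 g
    have h3 := h2.const_smul c
    have hsum : (c • ∑ _g : H, ContinuousLinearMap.id ℝ V) = ContinuousLinearMap.id ℝ V := by
      ext x
      simp only [ContinuousLinearMap.smul_apply, ContinuousLinearMap.sum_apply,
        ContinuousLinearMap.id_apply, Finset.sum_const, Finset.card_univ]
      rw [← Nat.cast_smul_eq_nsmul ℝ, smul_smul, hcdef, inv_mul_cancel₀, one_smul]
      exact Nat.cast_ne_zero.mpr Fintype.card_ne_zero
    rwa [hsum] at h3
  have hφder' : HasFDerivAt φ ((ContinuousLinearEquiv.refl ℝ V : V ≃L[ℝ] V) : V →L[ℝ] V) x₀ := by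
    rwa [ContinuousLinearEquiv.coe_refl]
  have hφx₀ : ContDiffAt ℝ (⊤ : ℕ∞) φ x₀ := hφO.contDiffAt (hO.mem_nhds hx₀)
  set e := hφx₀.toOpenPartialHomeomorph φ hφder' (by simp) with hedef
  have hcoe : (e : V → V) = φ := rfl
  have hx₀e : x₀ ∈ e.source := hφx₀.mem_toOpenPartialHomeomorph_source hφder' (by simp)
  -- the set where the derivative of φ is invertible
  have hfc : ContinuousOn (fderiv ℝ φ) O := hφO.continuousOn_fderiv_of_isOpen hO (by simp)
  set Uu : Set V := O ∩ (fderiv ℝ φ) ⁻¹' {L : V →L[ℝ] V | IsUnit L} with hUudef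
  have hUuOpen : IsOpen Uu := hfc.isOpen_inter_preimage hO Units.isOpen
  have hx₀Uu : x₀ ∈ Uu := by
    refine ⟨hx₀, ?_⟩
    show IsUnit (fderiv ℝ φ x₀)
    rw [hφder.fderiv, ← ContinuousLinearMap.one_def]
    exact isUnit_one
  set U₀ : Set V := e.source ∩ Uu with hU₀def
  have hU₀Open : IsOpen U₀ := e.open_source.inter hUuOpen
  have hx₀U₀ : x₀ ∈ U₀ := ⟨hx₀e, hx₀Uu⟩
  -- the invariant neighborhood
  set O' : Set V := ⋂ g : H, (O ∩ σ g ⁻¹' U₀) with hO'def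
  have hO'open : IsOpen O' :=
    isOpen_iInter_of_finite fun g =>
      (hσ_smooth g).continuousOn.isOpen_inter_preimage hO hU₀Open
  have hO'subO : O' ⊆ O := fun x hx => (Set.mem_iInter.1 hx 1).1
  have hO'subU₀ : O' ⊆ U₀ := by
    intro x hx
    have h := Set.mem_iInter.1 hx 1
    have := h.2
    rwa [Set.mem_preimage, hσ_one x h.1] at this
  have hx₀O' : x₀ ∈ O' := Set.mem_iInter.2 fun g => ⟨hx₀, by
    simp only [Set.mem_preimage]; rw [hσ_fix]; exact hx₀U₀⟩
  have hinvar : ∀ g : H, σ g '' O' = O' := by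
    intro g
    apply Set.Subset.antisymm
    · rintro _ ⟨x, hx, rfl⟩
      have hxO : x ∈ O := hO'subO hx
      refine Set.mem_iInter.2 fun k => ⟨(hσ_maps g).mapsTo hxO, ?_⟩
      simp only [Set.mem_preimage]
      rw [hσ_mul k g x hxO]
      exact (Set.mem_iInter.1 hx (k * g)).2
    · intro x hx
      have hxO : x ∈ O := hO'subO hx
      refine ⟨σ g⁻¹ x, ?_, ?_⟩
      · refine Set.mem_iInter.2 fun k => ⟨(hσ_maps g⁻¹).mapsTo hxO, ?_⟩
        simp only [Set.mem_preimage]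
        rw [hσ_mul k g⁻¹ x hxO]
        exact (Set.mem_iInter.1 hx (k * g⁻¹)).2
      · rw [hσ_mul g g⁻¹ x hxO, mul_inv_cancel, hσ_one x hxO]
  have hO'subsrc : O' ⊆ e.source := fun x hx => (hO'subU₀ hx).1
  set W : Set V := e '' O' with hWdef
  have hWopen : IsOpen W := e.isOpen_image_of_subset_source hO'open hO'subsrc
  have hWtarget : W ⊆ e.target := by
    rw [hWdef, ← e.image_source_eq_target]
    exact Set.image_mono hO'subsrc
  have h0W : (0 : V) ∈ W := ⟨x₀, hx₀O', by rw [hcoe]; exact hφ0⟩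
  have hinjφ : Set.InjOn φ O' := by
    rw [← hcoe]
    exact e.injOn.mono hO'subsrc
  have hWimg : W = φ '' O' := by rw [hWdef, hcoe]
  have hsymm_mem : ∀ y ∈ W, e.symm y ∈ O' := by
    rintro _ ⟨x, hx, rfl⟩
    rw [e.left_inv (hO'subsrc hx)]
    exact hx
  refine ⟨O', W, φ, hO'open, hO'subO, hx₀O', hinvar, hWopen, h0W,
    hφO.mono hO'subO, ?_, hφ0, ⟨e.symm, ?_, ?_, ?_⟩, ?_⟩
  · rw [hWimg]; exact hinjφ.bijOn_image
  · -- smoothness of the inverse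
    intro y hy
    apply ContDiffAt.contDiffWithinAt
    have hx' : e.symm y ∈ O' := hsymm_mem y hy
    have hxO : e.symm y ∈ O := hO'subO hx'
    have hu : IsUnit (fderiv ℝ φ (e.symm y)) := (hO'subU₀ hx').2.2
    have hdφ : HasFDerivAt φ
        ((ContinuousLinearEquiv.ofUnit hu.unit : V ≃L[ℝ] V) : V →L[ℝ] V) (e.symm y) := by
      have : ((ContinuousLinearEquiv.ofUnit hu.unit : V ≃L[ℝ] V) : V →L[ℝ] V)
          = fderiv ℝ φ (e.symm y) := rfl
      rw [this]
      exact (((hφO.contDiffAt (hO.mem_nhds hxO)).differentiableAt (by simp))).hasFDerivAt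
    exact e.contDiffAt_symm (hWtarget hy) hdφ (hφO.contDiffAt (hO.mem_nhds hxO))
  · intro x hx
    rw [← hcoe]
    exact e.left_inv (hO'subsrc hx)
  · intro y hy
    rw [← hcoe]
    exact e.right_inv (hWtarget hy)
  · -- equivariance
    intro g x hx
    have hxO : x ∈ O := hO'subO hx
    show φ (σ g x) = (A g) (φ x)
    calc φ (σ g x) = c • ∑ k : H, (A k⁻¹) (σ (k * g) x - x₀) := by
          rw [hφdef]
          simp only
          congr 1
          refine Finset.sum_congr rfl fun k _ => ?_
          rw [hσ_mul k g x hxO]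
      _ = c • ∑ j : H, (A (j * g⁻¹)⁻¹) (σ j x - x₀) := by
          congr 1
          refine Fintype.sum_equiv (Equiv.mulRight g) _ _ fun k => ?_
          simp [mul_inv_cancel_right]
      _ = c • ∑ j : H, (A g) ((A j⁻¹) (σ j x - x₀)) := by
          congr 1
          refine Finset.sum_congr rfl fun j _ => ?_
          have h : A (j * g⁻¹)⁻¹ = (A g).comp (A j⁻¹) := by
            rw [hcomp, mul_inv_rev, inv_inv]
          rw [h]; rfl
      _ = (A g) (φ x) := by
          rw [hφdef]
          simp only
          rw [map_smul, map_sum]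
end

section
/- Let S be an embedded leaf of a foliation (M, F) such that the kernel K_lin of the linear holonomy homomorphism dh : π₁(S,x) → GL(ν_x) is finitely generated and the linear holonomy cover S̃_lin (the cover of S corresponding to K_lin) satisfies H¹(S̃_lin; ℝ) = 0. Then the holonomy group H_hol of S equals the linear holonomy group H_lin, i.e., the kernel of the holonomy homomorphism π₁(S,x) → H_hol contains (hence equals, together with the reverse inclusion) K_lin. -/
open Filter Topology

/-- **Thurston stability around non-compact leaves** (Lemma 2 of the paper), in germ form.
Let `π = π₁(S, x)` and let `dh : π → GL(ν_x)` be the linear holonomy representation, with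
kernel `K_lin = ker dh`. Let `hol` assign to each element of `π` its holonomy transformation
(a germ at `0` of a diffeomorphism of the normal space `V = ν_x` fixing `0`), so that `hol`
is a homomorphism up to germs at `0` and the linearization of `hol g` at `0` is `dh g`.
If `K_lin` is finitely generated and `H¹(S̃_lin; ℝ) = 0` — equivalently (by universal
coefficients and `H₁(S̃_lin) = K_lin^{ab}`), every homomorphism `K_lin → (ℝ, +)` is
trivial — then every element of `K_lin` has trivial holonomy germ; that is, the holonomy
group `H_hol` of the leaf coincides with its linear holonomy group `H_lin`. -/
theorem thurston_stability_germ
    {V : Type*} [NormedAddCommGroup V] [NormedSpace ℝ V] [FiniteDimensional ℝ V]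
    {π : Type*} [Group π]
    (dh : π →* (V ≃L[ℝ] V))
    (hol : π → V → V)
    (hol_smooth : ∀ g : π, ContDiff ℝ (⊤ : ℕ∞) (hol g))
    (hol_fix : ∀ g : π, hol g 0 = 0)
    (hol_one : ∀ᶠ v in 𝓝 (0 : V), hol 1 v = v)
    (hol_mul : ∀ g k : π, ∀ᶠ v in 𝓝 (0 : V), hol (g * k) v = hol g (hol k v))
    (hol_lin : ∀ g : π, fderiv ℝ (hol g) 0 = (dh g : V →L[ℝ] V))
    (hfg : Group.FG (dh.ker))
    (hH1 : ∀ φ : dh.ker →* Multiplicative ℝ, φ = 1) :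
    ∀ g ∈ dh.ker, ∀ᶠ v in 𝓝 (0 : V), hol g v = v := by
  classical
  intro g₀ hg₀
  by_contra hcon
  set D : π → V → V := fun g w => hol g w - w with hDdef
  -- derivative of hol g at 0 is the identity, for g in the kernel
  have fzero : ∀ g ∈ dh.ker, fderiv ℝ (hol g) 0 = ContinuousLinearMap.id ℝ V := by
    intro g hg
    rw [hol_lin g, MonoidHom.mem_ker.mp hg]
    rfl
  -- small-Lipschitz estimate for the displacement of elements of the kernel
  have lip : ∀ g ∈ dh.ker, ∀ ε : ℝ, 0 < ε → ∃ δ : ℝ, 0 < δ ∧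
      ∀ x ∈ Metric.ball (0:V) δ, ∀ y ∈ Metric.ball (0:V) δ,
        ‖D g x - D g y‖ ≤ ε * ‖x - y‖ := by
    intro g hg ε hε
    have hdiff : Differentiable ℝ (hol g) := (hol_smooth g).differentiable (by simp)
    have hcont : Continuous fun u => fderiv ℝ (hol g) u :=
      (hol_smooth g).continuous_fderiv (by simp)
    have hc0 : Continuous fun u => ‖fderiv ℝ (hol g) u - ContinuousLinearMap.id ℝ V‖ :=
      (hcont.sub continuous_const).norm
    have hev : ∀ᶠ u in 𝓝 (0:V), ‖fderiv ℝ (hol g) u - ContinuousLinearMap.id ℝ V‖ < ε := by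
      have h0 : ‖fderiv ℝ (hol g) 0 - ContinuousLinearMap.id ℝ V‖ < ε := by
        rw [fzero g hg]; simpa using hε
      exact (hc0.continuousAt (x := (0:V))).eventually_lt continuousAt_const h0
    rcases Metric.eventually_nhds_iff_ball.mp hev with ⟨δ, hδ, hball⟩
    refine ⟨δ, hδ, fun x hx y hy => ?_⟩
    have hDd : ∀ u ∈ Metric.ball (0:V) δ, DifferentiableAt ℝ (D g) u := fun u _ =>
      (hdiff u).sub differentiableAt_id
    have hDb : ∀ u ∈ Metric.ball (0:V) δ, ‖fderiv ℝ (D g) u‖ ≤ ε := by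
      intro u hu
      have : fderiv ℝ (D g) u = fderiv ℝ (hol g) u - ContinuousLinearMap.id ℝ V := by
        have := fderiv_fun_sub (𝕜 := ℝ) (f := hol g) (g := fun w : V => w) (hdiff u)
          differentiableAt_id
        simpa [hDdef, fderiv_id] using this
      rw [this]
      exact le_of_lt (hball u hu)
    have := Convex.norm_image_sub_le_of_norm_fderiv_le hDd hDb (convex_ball 0 δ) hy hx
    simpa using this
  -- a sequence witnessing nontrivial holonomy of g₀
  have hfreq : ∃ᶠ w in 𝓝 (0:V), hol g₀ w ≠ w := Filter.not_eventually.mp hcon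
  obtain ⟨v, hv0, hvne⟩ := Filter.exists_seq_forall_of_frequently hfreq
  -- generators
  obtain ⟨S, hS⟩ := (Group.fg_iff_monoid_fg.mp hfg).fg_top
  set T : Finset dh.ker := insert 1 S with hT
  have hTne : T.Nonempty := ⟨1, Finset.mem_insert_self _ _⟩
  have hword : ∀ x : dh.ker, ∃ l : List dh.ker, (∀ y ∈ l, y ∈ T) ∧ l.prod = x := by
    intro x
    have hx : x ∈ Submonoid.closure (↑S : Set dh.ker) := by rw [hS]; trivial
    obtain ⟨l, hl, hlp⟩ := Submonoid.exists_list_of_mem_closure hx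
    exact ⟨l, fun y hy => Finset.mem_insert_of_mem (hl y hy), hlp⟩
  -- the scale
  set τ : ℕ → ℝ := fun n => T.sup' hTne (fun s => ‖D (↑s) (v n)‖) with hτdef
  have τge : ∀ n, ∀ s ∈ T, ‖D (↑s) (v n)‖ ≤ τ n := fun n s hs =>
    Finset.le_sup' (fun s : dh.ker => ‖D (↑s) (v n)‖) hs
  have τnonneg : ∀ n, 0 ≤ τ n := fun n =>
    le_trans (norm_nonneg _) (τge n 1 (Finset.mem_insert_self _ _))
  -- eventual folding of holonomy over words
  have fold : ∀ l : List π, ∀ᶠ w in 𝓝 (0:V),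
      hol l.prod w = l.foldr (fun s u => hol s u) w := by
    intro l
    induction l with
    | nil => simpa using hol_one
    | cons a t ih =>
      filter_upwards [hol_mul a t.prod, ih] with w h1 h2
      simp only [List.prod_cons, List.foldr_cons, h1, h2]
  -- τ is eventually positive
  obtain ⟨l₀, hl₀T, hl₀p⟩ := hword ⟨g₀, hg₀⟩
  have hl₀p' : (l₀.map ((↑) : dh.ker → π)).prod = g₀ := by
    have h1 := congrArg dh.ker.subtype hl₀p
    rw [MonoidHom.map_list_prod] at h1
    simpa using h1
  have τpos : ∀ᶠ n in atTop, 0 < τ n := by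
    have hfold := fold (l₀.map ((↑) : dh.ker → π))
    filter_upwards [hv0.eventually hfold] with n hn
    rcases lt_or_eq_of_le (τnonneg n) with h | h
    · exact h
    exfalso
    have hall : ∀ s ∈ l₀, hol (↑s) (v n) = v n := by
      intro s hs
      have h1 : ‖D (↑s) (v n)‖ ≤ 0 := h ▸ τge n s (hl₀T s hs)
      have h2 : D (↑s) (v n) = 0 :=
        norm_eq_zero.mp (le_antisymm h1 (norm_nonneg _))
      have := sub_eq_zero.mp h2
      simpa using this
    have hfix : ∀ l : List dh.ker, (∀ s ∈ l, s ∈ l₀) →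
        (l.map ((↑) : dh.ker → π)).foldr (fun s u => hol s u) (v n) = v n := by
      intro l
      induction l with
      | nil => intro _; simp
      | cons a t ih =>
        intro h
        have h1 := ih fun s hs => h s (List.mem_cons_of_mem _ hs)
        simp only [List.map_cons, List.foldr_cons, h1]
        exact hall a (h a (List.mem_cons_self (a := a) (l := t)))
    have := hfix l₀ (fun s hs => hs)
    rw [hl₀p'] at hn
    exact hvne n (hn.trans this)
  -- cocycle estimate
  have cocycle : ∀ g ∈ dh.ker, ∀ k : π, ∀ ε : ℝ, 0 < ε →
      ∀ᶠ n in atTop, ‖D (g*k) (v n) - D g (v n) - D k (v n)‖ ≤ ε * ‖D k (v n)‖ := by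
    intro g hg k ε hε
    obtain ⟨δ, hδ, hlip⟩ := lip g hg ε hε
    have hk0 : Tendsto (fun n => hol k (v n)) atTop (𝓝 0) := by
      have hc := ((hol_smooth k).continuous.tendsto 0)
      rw [hol_fix k] at hc
      exact hc.comp hv0
    filter_upwards [hv0.eventually (hol_mul g k),
      hv0.eventually (Metric.ball_mem_nhds (0:V) hδ),
      hk0.eventually (Metric.ball_mem_nhds (0:V) hδ)] with n hmul hb1 hb2
    have key : D (g*k) (v n) - D g (v n) - D k (v n)
        = D g (hol k (v n)) - D g (v n) := by
      simp only [hDdef, hmul]; abel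
    rw [key]
    have := hlip _ hb2 _ hb1
    calc ‖D g (hol k (v n)) - D g (v n)‖ ≤ ε * ‖hol k (v n) - v n‖ := this
      _ = ε * ‖D k (v n)‖ := by simp [hDdef]
  -- word-length bound on displacements
  have listbound : ∀ l : List dh.ker, (∀ y ∈ l, y ∈ T) →
      ∃ C : ℝ, 0 ≤ C ∧ ∀ᶠ n in atTop, ‖D (↑l.prod) (v n)‖ ≤ C * τ n := by
    intro l
    induction l with
    | nil =>
      intro _
      refine ⟨0, le_refl 0, ?_⟩
      filter_upwards [hv0.eventually hol_one] with n hn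
      simp [hDdef, hn]
    | cons a t ih =>
      intro h
      obtain ⟨C, hC0, hC⟩ := ih fun y hy => h y (List.mem_cons_of_mem _ hy)
      refine ⟨1 + 2*C, by positivity, ?_⟩
      have hco := cocycle (↑a) a.2 (↑t.prod) 1 one_pos
      filter_upwards [hC, hco, τpos] with n h1 h2 h3
      have hcoe : ((a::t).prod : π) = (↑a : π) * (↑t.prod : π) := by
        rw [List.prod_cons]; rfl
      rw [hcoe]
      have hre : D ((↑a : π) * ↑t.prod) (v n)
          = (D ((↑a : π) * ↑t.prod) (v n) - D (↑a : π) (v n) - D (↑t.prod : π) (v n))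
            + D (↑a : π) (v n) + D (↑t.prod : π) (v n) := by abel
      have htri := norm_add₃_le
        (a := D ((↑a : π) * ↑t.prod) (v n) - D (↑a : π) (v n) - D (↑t.prod : π) (v n))
        (b := D (↑a : π) (v n)) (c := D (↑t.prod : π) (v n))
      rw [← hre] at htri
      have hτa : ‖D (↑a : π) (v n)‖ ≤ τ n := τge n a (h a (List.mem_cons_self (a := a) (l := t)))
      have h2' : ‖D ((↑a : π) * ↑t.prod) (v n) - D (↑a : π) (v n) - D (↑t.prod : π) (v n)‖
          ≤ 1 * ‖D (↑t.prod : π) (v n)‖ := h2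
      linarith [htri, h2', h1, hτa]
  have bound : ∀ x : dh.ker, ∃ C : ℝ, 0 ≤ C ∧
      ∀ᶠ n in atTop, ‖D (↑x) (v n)‖ ≤ C * τ n := by
    intro x
    obtain ⟨l, hlT, hlp⟩ := hword x
    obtain ⟨C, hC0, hC⟩ := listbound l hlT
    exact ⟨C, hC0, by rwa [hlp] at hC⟩
  -- the ultrafilter limit
  set U : Ultrafilter ℕ := Ultrafilter.of atTop with hUdef
  have hUle : (U : Filter ℕ) ≤ atTop := Ultrafilter.of_le _
  set f : dh.ker → ℕ → V := fun x n => (τ n)⁻¹ • D (↑x) (v n) with hfdef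
  have flim : ∀ x : dh.ker, ∃ a : V, Tendsto (f x) U (𝓝 a) := by
    intro x
    obtain ⟨C, hC0, hC⟩ := bound x
    have hmem : ∀ᶠ n in (U : Filter ℕ), f x n ∈ Metric.closedBall (0:V) C := by
      filter_upwards [hUle hC, hUle τpos] with n h1 h2
      rw [Metric.mem_closedBall, dist_zero_right, hfdef]
      calc ‖(τ n)⁻¹ • D (↑x) (v n)‖ = (τ n)⁻¹ * ‖D (↑x) (v n)‖ := by
            rw [norm_smul, Real.norm_eq_abs, abs_of_nonneg (inv_nonneg.mpr h2.le)]
        _ ≤ (τ n)⁻¹ * (C * τ n) := by gcongr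
        _ = C := by field_simp
    obtain ⟨a, _, ha⟩ := (isCompact_closedBall (0:V) C).ultrafilter_le_nhds
      (U.map (f x)) (by
        rw [Ultrafilter.coe_map, Filter.le_principal_iff, Filter.mem_map]
        exact hmem)
    exact ⟨a, by rwa [Ultrafilter.coe_map] at ha⟩
  choose φ hφ using flim
  -- additivity of φ
  have φadd : ∀ x y : dh.ker, φ (x*y) = φ x + φ y := by
    intro x y
    obtain ⟨C, hC0, hC⟩ := bound y
    have hdiff0 : Tendsto (fun n => f (x*y) n - f x n - f y n) atTop (𝓝 0) := by
      rw [NormedAddCommGroup.tendsto_nhds_zero]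
      intro ε hε
      have hε' : (0:ℝ) < ε / (2*(C+1)) := by positivity
      filter_upwards [cocycle (↑x) x.2 (↑y) _ hε', hC, τpos] with n h1 h2 h3
      have hcoe : ((x*y : dh.ker) : π) = (↑x : π) * (↑y : π) := rfl
      have heq : f (x*y) n - f x n - f y n
          = (τ n)⁻¹ • (D ((↑x : π) * ↑y) (v n) - D (↑x) (v n) - D (↑y) (v n)) := by
        simp only [hfdef, hcoe, smul_sub]
      rw [heq, norm_smul, Real.norm_eq_abs, abs_of_nonneg (inv_nonneg.mpr h3.le)]
      calc (τ n)⁻¹ * ‖D ((↑x : π) * ↑y) (v n) - D (↑x) (v n) - D (↑y) (v n)‖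
          ≤ (τ n)⁻¹ * (ε / (2*(C+1)) * ‖D (↑y) (v n)‖) := by gcongr
        _ ≤ (τ n)⁻¹ * (ε / (2*(C+1)) * (C * τ n)) := by gcongr
        _ = ε * (C / (2*(C+1))) := by field_simp
        _ < ε := by
            have h4 : C / (2*(C+1)) < 1 := by
              rw [div_lt_one (by positivity)]; linarith
            calc ε * (C / (2*(C+1))) < ε * 1 := by
                  apply mul_lt_mul_of_pos_left h4 hε
              _ = ε := mul_one ε
    have t1 : Tendsto (fun n => f (x*y) n - f x n - f y n) U (𝓝 0) :=
      hdiff0.mono_left hUle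
    have t2 : Tendsto (fun n => (f (x*y) n - f x n - f y n) + f x n + f y n)
        U (𝓝 (0 + φ x + φ y)) := (t1.add (hφ x)).add (hφ y)
    have t3 : Tendsto (f (x*y)) U (𝓝 (φ x + φ y)) := by
      have : (fun n => (f (x*y) n - f x n - f y n) + f x n + f y n) = f (x*y) := by
        funext n; abel
      rw [this] at t2
      simpa using t2
    exact tendsto_nhds_unique (hφ (x*y)) t3
  have φone : φ 1 = 0 := by
    have h := φadd 1 1
    rw [one_mul] at h
    exact (left_eq_add.mp h)
  -- nontriviality of φ
  have hmax : ∀ n, ∃ s ∈ T, τ n = ‖D (↑s) (v n)‖ := fun n =>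
    Finset.exists_mem_eq_sup' hTne _
  choose σ hσT hσ using hmax
  have hUnion : {n | 0 < τ n} ⊆ ⋃ s ∈ (↑T : Set dh.ker), {n | σ n = s ∧ 0 < τ n} := by
    intro n hn
    exact Set.mem_biUnion (hσT n) ⟨rfl, hn⟩
  have hτU : {n | 0 < τ n} ∈ (U : Filter ℕ) := hUle τpos
  have hUni : (⋃ s ∈ (↑T : Set dh.ker), {n | σ n = s ∧ 0 < τ n}) ∈ U :=
    Filter.mem_of_superset hτU hUnion
  obtain ⟨s, hsT, hsU⟩ := (Ultrafilter.finite_biUnion_mem_iff T.finite_toSet).mp hUni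
  have honeev : ∀ᶠ n in (U : Filter ℕ), ‖f s n‖ = 1 := by
    filter_upwards [hsU] with n hn
    obtain ⟨h1, h2⟩ := hn
    rw [hfdef]
    rw [norm_smul, Real.norm_eq_abs, abs_of_nonneg (inv_nonneg.mpr h2.le)]
    rw [← h1, ← hσ n]
    field_simp
  have hone : Tendsto (fun n => ‖f s n‖) U (𝓝 1) :=
    Tendsto.congr' (honeev.mono fun n h => h.symm) tendsto_const_nhds
  have hφnorm : ‖φ s‖ = 1 := tendsto_nhds_unique (hφ s).norm hone
  have hφs : φ s ≠ 0 := by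
    intro h
    rw [h, norm_zero] at hφnorm
    exact zero_ne_one hφnorm
  obtain ⟨ℓ, hℓ1, hℓ⟩ := exists_dual_vector ℝ (φ s) (norm_ne_zero_iff.mpr hφs)
  -- the contradiction with H¹ = 0
  set ψ : dh.ker →* Multiplicative ℝ :=
    { toFun := fun x => Multiplicative.ofAdd (ℓ (φ x))
      map_one' := by simp [φone]
      map_mul' := by intro x y; simp [φadd, ofAdd_add] } with hψdef
  have hψ1 := hH1 ψ
  have hψs : ψ s = 1 := by rw [hψ1]; rfl
  have : ℓ (φ s) = 0 := by
    have := congrArg Multiplicative.toAdd hψs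
    simpa [hψdef] using this
  rw [hℓ, hφnorm] at this
  norm_num at this
end
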